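/- arXiv:2310.12964 — 3 statements merged into one kernel-verified Lean document; each statement's English description precedes it below -/
import Mathlib

section
/- Under the label shift model, for every predicted label i ∈ Fin K, the target predicted-label probability satisfies q*_i = Σ_{j} (C_P)_{i j} · w*_j, i.e. q* = C_P.mulVec w*; consequently, if the confusion matrix C_P is invertible, then w* = C_P⁻¹.mulVec q*. -/
open MeasureTheory

/-- Under the label shift model, the target predicted-label distribution satisfies
`q* = C_P.mulVec w*`; consequently, if the confusion matrix is invertible,
`w* = C_P⁻¹.mulVec q*`. -/
theorem label_shift_weights_eq
    {K : ℕ} {X : Type*} [MeasurableSpace X]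
    (μ : Fin K → Measure X) (hμ : ∀ y, IsProbabilityMeasure (μ y))
    (p q : Fin K → ℝ)
    (hp : ∀ y, 0 < p y) (hpsum : ∑ y, p y = 1)
    (hq : ∀ y, 0 ≤ q y) (hqsum : ∑ y, q y = 1)
    (g : X → Fin K) (hg : Measurable g)
    (C : Matrix (Fin K) (Fin K) ℝ)
    (hC : ∀ i j, C i j = p j * (μ j {x | g x = i}).toReal)
    (w : Fin K → ℝ) (hw : ∀ y, w y = q y / p y)
    (qstar : Fin K → ℝ)
    (hqstar : ∀ i, qstar i = ∑ j, q j * (μ j {x | g x = i}).toReal) :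
    qstar = C.mulVec w ∧ (IsUnit C.det → w = C⁻¹.mulVec qstar) := by
  have h1 : qstar = C.mulVec w := by
    funext i
    rw [hqstar, Matrix.mulVec, dotProduct]
    refine Finset.sum_congr rfl fun j _ => ?_
    rw [hC, hw]
    field_simp [(hp j).ne']
  refine ⟨h1, fun hdet => ?_⟩
  rw [h1, Matrix.mulVec_mulVec, Matrix.nonsing_inv_mul _ hdet, Matrix.one_mulVec]
end

section
/- Phase-one invariant of interval Gaussian elimination: let K ≥ 1 and define six sequences indexed by t ∈ {0, …, K−1}: exact matrices c^t : Matrix (Fin K) (Fin K) ℝ and vectors q^t : Fin K → ℝ, together with interval bounds c̲^t, c̄^t, q̲^t, q̄^t, where at step t the pivot is k = t and the exact update is c^{t+1}_{ij} = c^t_{ij} − c^t_{ik} c^t_{kj} / c^t_{kk} for i > k (otherwise unchanged) and q^{t+1}_i = q^t_i − c^t_{ik} q^t_k / c^t_{kk} for i > k (otherwise unchanged); the interval updates are c̲^{t+1}_{ij} = 0 if i > k and j ≤ k, c̲^{t+1}_{ij} = c̲^t_{ij} − c̄^t_{ik} c̄^t_{kj} / c̲^t_{kk} if i > k and j > k,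 else c̲^t_{ij}; c̄^{t+1}_{ij} = 0 if i > k and j ≤ k, c̄^{t+1}_{ij} = c̄^t_{ij} − c̲^t_{ik} c̲^t_{kj} / c̄^t_{kk} if i > k and j > k, else c̄^t_{ij}; q̲^{t+1}_i = q̲^t_i − c̄^t_{ik} q̄^t_k / c̲^t_{kk} if i > k else q̲^t_i; and q̄^{t+1}_i = q̄^t_i − c̲^t_{ik} q̲^t_k / c̄^t_{kk} if i > k else q̄^t_i. Suppose the initial bounds c̲^0 ≤ c^0 ≤ c̄^0 and q̲^0 ≤ q^0 ≤ q̄^0 hold elementwise, and for every t and all i, j: c̲^t_{ij} ≥ 0, c̲^t_{ii} > 0, and q̲^t_i ≥ 0. Then for every t ∈ {0, …, K−1}, elementwise c̲^t ≤ c^t ≤ c̄^t and q̲^t ≤ q^t ≤ q̄^t. -/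
/-!
Induction on the step `t`, carrying one extra invariant: below the diagonal, in the columns
already eliminated, both interval bounds are `0`, hence so is the exact entry. In the
trailing block `i, j > k` the exact update `c_ij - c_ik c_kj / c_kk` is monotone in `c_ij`
and antitone in the nonnegative entries `c_ik, c_kj` and in the positive pivot `c_kk`, so
the interval update brackets it; in the eliminated column `j ≤ k` the exact update is `0`,
matching the interval bounds `[0, 0]`.
-/

open Set

section IntervalArithmetic

variable {α : Type*} [Field α] [LinearOrder α] [IsStrictOrderedRing α]

lemma mul_div_mem_Icc {x xl xu y yl yu d dl du : α}
    (hx : x ∈ Icc xl xu) (hy : y ∈ Icc yl yu) (hd : d ∈ Icc dl du)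
    (hxl : 0 ≤ xl) (hyl : 0 ≤ yl) (hdl : 0 < dl) :
    x * y / d ∈ Icc (xl * yl / du) (xu * yu / dl) := by
  have hx₀ : 0 ≤ x := hxl.trans hx.1
  have hy₀ : 0 ≤ y := hyl.trans hy.1
  exact ⟨div_le_div₀ (mul_nonneg hx₀ hy₀) (mul_le_mul hx.1 hy.1 hyl hx₀)
      (hdl.trans_le hd.1) hd.2,
    div_le_div₀ (mul_nonneg (hx₀.trans hx.2) (hy₀.trans hy.2))
      (mul_le_mul hx.2 hy.2 hy₀ (hx₀.trans hx.2)) hdl hd.1⟩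

lemma sub_mem_Icc_sub {a al au b bl bu : α} (ha : a ∈ Icc al au) (hb : b ∈ Icc bl bu) :
    a - b ∈ Icc (al - bu) (au - bl) :=
  ⟨sub_le_sub ha.1 hb.2, sub_le_sub ha.2 hb.1⟩

lemma sub_mul_div_mem_Icc {a al au x xl xu y yl yu d dl du : α}
    (ha : a ∈ Icc al au) (hx : x ∈ Icc xl xu) (hy : y ∈ Icc yl yu) (hd : d ∈ Icc dl du)
    (hxl : 0 ≤ xl) (hyl : 0 ≤ yl) (hdl : 0 < dl) :
    a - x * y / d ∈ Icc (al - xu * yu / dl) (au - xl * yl / du) :=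
  sub_mem_Icc_sub ha (mul_div_mem_Icc hx hy hd hxl hyl hdl)

end IntervalArithmetic

section EliminationStep

variable {ι α : Type*} [LinearOrder ι] [Field α] {k : ι}
  {c cl cu c' cl' cu' : Matrix ι ι α} {q ql qu q' ql' qu' : ι → α}

lemma elimStep_matrix_eq_zero (hc : ∀ i j, c' i j =
      if k < i then c i j - c i k * c k j / c k k else c i j)
    (hzero : ∀ i j, j < k → k ≤ i → c i j = 0) (hpiv : c k k ≠ 0)
    {i j : ι} (hj : j ≤ k) (hi : k < i) : c' i j = 0 := by
  rw [hc, if_pos hi]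
  rcases hj.lt_or_eq with hj | rfl
  · rw [hzero i j hj hi.le, hzero k j hj le_rfl]
    ring
  · rw [mul_div_cancel_right₀ _ hpiv, sub_self]

lemma elimStep_bounds_eq_zero (hcl : ∀ i j, cl' i j =
      if k < i ∧ j ≤ k then 0
      else if k < i ∧ k < j then cl i j - cu i k * cu k j / cl k k else cl i j)
    (hcu : ∀ i j, cu' i j =
      if k < i ∧ j ≤ k then 0
      else if k < i ∧ k < j then cu i j - cl i k * cl k j / cu k k else cu i j)
    {i j : ι} (hj : j ≤ k) (hi : k < i) : cl' i j = 0 ∧ cu' i j = 0 := by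
  rw [hcl, hcu, if_pos ⟨hi, hj⟩, if_pos ⟨hi, hj⟩]
  exact ⟨rfl, rfl⟩

variable [LinearOrder α] [IsStrictOrderedRing α]

lemma elimStep_matrix_mem_Icc (hc : ∀ i j, c' i j =
      if k < i then c i j - c i k * c k j / c k k else c i j)
    (hcl : ∀ i j, cl' i j =
      if k < i ∧ j ≤ k then 0
      else if k < i ∧ k < j then cl i j - cu i k * cu k j / cl k k else cl i j)
    (hcu : ∀ i j, cu' i j =
      if k < i ∧ j ≤ k then 0
      else if k < i ∧ k < j then cu i j - cl i k * cl k j / cu k k else cu i j)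
    (hbound : ∀ i j, c i j ∈ Icc (cl i j) (cu i j))
    (hzero : ∀ i j, j < k → k ≤ i → cl i j = 0 ∧ cu i j = 0)
    (hclnn : ∀ i j, 0 ≤ cl i j) (hpiv : 0 < cl k k) (i j : ι) :
    c' i j ∈ Icc (cl' i j) (cu' i j) := by
  by_cases hi : k < i
  · rcases le_or_gt j k with hj | hj
    · have hczero : ∀ i j, j < k → k ≤ i → c i j = 0 := fun i j hj hi ↦ by
        have h := hbound i j
        rw [(hzero i j hj hi).1, (hzero i j hj hi).2, Icc_self] at h
        exact h
      rw [elimStep_matrix_eq_zero hc hczero (hpiv.trans_le (hbound k k).1).ne' hj hi,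
        (elimStep_bounds_eq_zero hcl hcu hj hi).1, (elimStep_bounds_eq_zero hcl hcu hj hi).2]
      exact ⟨le_rfl, le_rfl⟩
    · rw [hc, hcl, hcu, if_pos hi, if_neg (fun h ↦ hj.not_ge h.2), if_pos ⟨hi, hj⟩,
        if_neg (fun h ↦ hj.not_ge h.2), if_pos ⟨hi, hj⟩]
      exact sub_mul_div_mem_Icc (hbound i j) (hbound i k) (hbound k j) (hbound k k)
        (hclnn i k) (hclnn k j) hpiv
  · rw [hc, hcl, hcu, if_neg hi, if_neg (fun h ↦ hi h.1), if_neg (fun h ↦ hi h.1),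
      if_neg (fun h ↦ hi h.1), if_neg (fun h ↦ hi h.1)]
    exact hbound i j

lemma elimStep_vector_mem_Icc (hq : ∀ i, q' i =
      if k < i then q i - c i k * q k / c k k else q i)
    (hql : ∀ i, ql' i = if k < i then ql i - cu i k * qu k / cl k k else ql i)
    (hqu : ∀ i, qu' i = if k < i then qu i - cl i k * ql k / cu k k else qu i)
    (hcbound : ∀ i j, c i j ∈ Icc (cl i j) (cu i j))
    (hqbound : ∀ i, q i ∈ Icc (ql i) (qu i))
    (hclnn : ∀ i j, 0 ≤ cl i j) (hpiv : 0 < cl k k) (hqlnn : ∀ i, 0 ≤ ql i) (i : ι) :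
    q' i ∈ Icc (ql' i) (qu' i) := by
  rw [hq, hql, hqu]
  split_ifs
  · exact sub_mul_div_mem_Icc (hqbound i) (hcbound i k) (hqbound k) (hcbound k k)
      (hclnn i k) (hqlnn k) hpiv
  · exact hqbound i

end EliminationStep

theorem interval_gaussian_elim_phase_one_invariant_general
    (K : ℕ)
    (c cl cu : ℕ → Matrix (Fin K) (Fin K) ℝ)
    (q ql qu : ℕ → Fin K → ℝ)
    -- exact forward-elimination updates, pivot k with (k : ℕ) = t
    (hc : ∀ (t : ℕ) (k : Fin K), (k : ℕ) = t → t + 1 < K → ∀ i j : Fin K,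
      c (t + 1) i j =
        if k < i then c t i j - c t i k * c t k j / c t k k else c t i j)
    (hq : ∀ (t : ℕ) (k : Fin K), (k : ℕ) = t → t + 1 < K → ∀ i : Fin K,
      q (t + 1) i =
        if k < i then q t i - c t i k * q t k / c t k k else q t i)
    -- interval lower-bound updates for the matrix
    (hcl : ∀ (t : ℕ) (k : Fin K), (k : ℕ) = t → t + 1 < K → ∀ i j : Fin K,
      cl (t + 1) i j =
        if k < i ∧ j ≤ k then 0
        else if k < i ∧ k < j then cl t i j - cu t i k * cu t k j / cl t k k
        else cl t i j)
    -- interval upper-bound updates for the matrix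
    (hcu : ∀ (t : ℕ) (k : Fin K), (k : ℕ) = t → t + 1 < K → ∀ i j : Fin K,
      cu (t + 1) i j =
        if k < i ∧ j ≤ k then 0
        else if k < i ∧ k < j then cu t i j - cl t i k * cl t k j / cu t k k
        else cu t i j)
    -- interval lower-bound updates for the vector
    (hql : ∀ (t : ℕ) (k : Fin K), (k : ℕ) = t → t + 1 < K → ∀ i : Fin K,
      ql (t + 1) i =
        if k < i then ql t i - cu t i k * qu t k / cl t k k else ql t i)
    -- interval upper-bound updates for the vector
    (hqu : ∀ (t : ℕ) (k : Fin K), (k : ℕ) = t → t + 1 < K → ∀ i : Fin K,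
      qu (t + 1) i =
        if k < i then qu t i - cl t i k * ql t k / cu t k k else qu t i)
    -- initial elementwise bounds
    (hinitc : ∀ i j, cl 0 i j ≤ c 0 i j ∧ c 0 i j ≤ cu 0 i j)
    (hinitq : ∀ i, ql 0 i ≤ q 0 i ∧ q 0 i ≤ qu 0 i)
    -- positivity conditions on the lower bounds at every step
    (hclnn : ∀ t < K, ∀ i j : Fin K, 0 ≤ cl t i j)
    (hclpos : ∀ t < K, ∀ i : Fin K, 0 < cl t i i)
    (hqlnn : ∀ t < K, ∀ i : Fin K, 0 ≤ ql t i) :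
    ∀ t < K,
      (∀ i j : Fin K, cl t i j ≤ c t i j ∧ c t i j ≤ cu t i j) ∧
        (∀ i : Fin K, ql t i ≤ q t i ∧ q t i ≤ qu t i) := by
  suffices H : ∀ t < K, (∀ i j, c t i j ∈ Icc (cl t i j) (cu t i j)) ∧
      (∀ i, q t i ∈ Icc (ql t i) (qu t i)) ∧
      ∀ i j : Fin K, (j : ℕ) < t → t ≤ (i : ℕ) → cl t i j = 0 ∧ cu t i j = 0 from
    fun t ht ↦ ⟨(H t ht).1, (H t ht).2.1⟩
  intro t
  induction t with
  | zero => exact fun _ ↦ ⟨hinitc, hinitq, fun _ _ hj _ ↦ absurd hj (Nat.not_lt_zero _)⟩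
  | succ t ih =>
    intro ht
    have htK : t < K := by omega
    obtain ⟨hcbound, hqbound, hzero⟩ := ih htK
    let k : Fin K := ⟨t, htK⟩
    have hpiv : 0 < cl t k k := hclpos t htK k
    exact ⟨elimStep_matrix_mem_Icc (hc t k rfl ht) (hcl t k rfl ht) (hcu t k rfl ht)
        hcbound hzero (hclnn t htK) hpiv,
      elimStep_vector_mem_Icc (hq t k rfl ht) (hql t k rfl ht) (hqu t k rfl ht)
        hcbound hqbound (hclnn t htK) hpiv (hqlnn t htK),
      fun i j hj hi ↦ elimStep_bounds_eq_zero (hcl t k rfl ht) (hcu t k rfl ht)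
        (Nat.lt_succ_iff.mp hj) hi⟩

/-- Phase-one invariant of interval Gaussian elimination: if the initial elementwise
bounds hold and all lower bounds satisfy the positivity conditions, then the elementwise
confidence intervals remain valid at every step `t ∈ {0, …, K−1}` of forward
elimination (with pivot `k = t` at step `t`). -/
theorem interval_gaussian_elim_phase_one_invariant
    (K : ℕ) (hK : 1 ≤ K)
    (c cl cu : ℕ → Matrix (Fin K) (Fin K) ℝ)
    (q ql qu : ℕ → Fin K → ℝ)
    -- exact forward-elimination updates, pivot k with (k : ℕ) = t
    (hc : ∀ (t : ℕ) (k : Fin K), (k : ℕ) = t → t + 1 < K → ∀ i j : Fin K,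
      c (t + 1) i j =
        if k < i then c t i j - c t i k * c t k j / c t k k else c t i j)
    (hq : ∀ (t : ℕ) (k : Fin K), (k : ℕ) = t → t + 1 < K → ∀ i : Fin K,
      q (t + 1) i =
        if k < i then q t i - c t i k * q t k / c t k k else q t i)
    -- interval lower-bound updates for the matrix
    (hcl : ∀ (t : ℕ) (k : Fin K), (k : ℕ) = t → t + 1 < K → ∀ i j : Fin K,
      cl (t + 1) i j =
        if k < i ∧ j ≤ k then 0
        else if k < i ∧ k < j then cl t i j - cu t i k * cu t k j / cl t k k
        else cl t i j)
    -- interval upper-bound updates for the matrix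
    (hcu : ∀ (t : ℕ) (k : Fin K), (k : ℕ) = t → t + 1 < K → ∀ i j : Fin K,
      cu (t + 1) i j =
        if k < i ∧ j ≤ k then 0
        else if k < i ∧ k < j then cu t i j - cl t i k * cl t k j / cu t k k
        else cu t i j)
    -- interval lower-bound updates for the vector
    (hql : ∀ (t : ℕ) (k : Fin K), (k : ℕ) = t → t + 1 < K → ∀ i : Fin K,
      ql (t + 1) i =
        if k < i then ql t i - cu t i k * qu t k / cl t k k else ql t i)
    -- interval upper-bound updates for the vector
    (hqu : ∀ (t : ℕ) (k : Fin K), (k : ℕ) = t → t + 1 < K → ∀ i : Fin K,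
      qu (t + 1) i =
        if k < i then qu t i - cl t i k * ql t k / cu t k k else qu t i)
    -- initial elementwise bounds
    (hinitc : ∀ i j, cl 0 i j ≤ c 0 i j ∧ c 0 i j ≤ cu 0 i j)
    (hinitq : ∀ i, ql 0 i ≤ q 0 i ∧ q 0 i ≤ qu 0 i)
    -- positivity conditions on the lower bounds at every step
    (hclnn : ∀ t < K, ∀ i j : Fin K, 0 ≤ cl t i j)
    (hclpos : ∀ t < K, ∀ i : Fin K, 0 < cl t i i)
    (hqlnn : ∀ t < K, ∀ i : Fin K, 0 ≤ ql t i) :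
    ∀ t < K,
      (∀ i j : Fin K, cl t i j ≤ c t i j ∧ c t i j ≤ cu t i j) ∧
        (∀ i : Fin K, ql t i ≤ q t i ∧ q t i ≤ qu t i) :=
  interval_gaussian_elim_phase_one_invariant_general K c cl cu q ql qu hc hq hcl hcu hql hqu hinitc
    hinitq hclnn hclpos hqlnn
end

section
/- Phase-two (back-substitution) interval correctness for a triangular system: let C : Matrix (Fin K) (Fin K) ℝ be upper triangular (C i j = 0 whenever j < i) with elementwise bounds 0 ≤ c̲ ≤ C ≤ c̄ and c̲ i i > 0 for all i, let q, q̲, q̄ : Fin K → ℝ with q̲ ≤ q ≤ q̄ elementwise, and let w : Fin K → ℝ satisfy C.mulVec w = q. Define, recursively for i from K−1 down to 0: s̲_i = Σ_{j > i} c̲_{ij} · w̲_j, s̄_i = Σ_{j > i} c̄_{ij} · w̄_j, w̲_i = (q̲_i − s̄_i) / c̄_{ii}, and w̄_i = (q̄_i − s̲_i) / c̲_{ii}. If w̲_i ≥ 0 for all i, then w̲_i ≤ w_i ≤ w̄_i for all i. -/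
/-!
Downward induction on the row index. Once `w̲ j ≤ w j ≤ w̄ j` for every `j > i`, nonnegativity
of the entries brackets the tail `∑_{j>i} C i j * w j` between `∑ c̲ i j * w̲ j` and
`∑ c̄ i j * w̄ j`, so the `i`-th equation `C i i * w i = q i - tail` brackets `C i i * w i`.
Dividing by the diagonal bounds `c̄ i i ≥ C i i ≥ c̲ i i` instead of `C i i` stays sound because
`w̲ i` and `w i` are nonnegative.
-/

open Finset

theorem Matrix.BlockTriangular.mulVec_apply {ι R : Type*} [Fintype ι] [LinearOrder ι]
    [NonUnitalNonAssocSemiring R] {C : Matrix ι ι R} (hC : C.BlockTriangular id) (w : ι → R)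
    (i : ι) : C.mulVec w i = C i i * w i + ∑ j ∈ univ.filter (fun j => i < j), C i j * w j := by
  classical
  rw [Matrix.mulVec, dotProduct, ← add_sum_erase _ _ (mem_univ i)]
  congr 1
  refine (sum_subset (fun j hj => ?_) fun j hj hji => ?_).symm
  · exact mem_erase.2 ⟨(mem_filter.1 hj).2.ne', mem_univ j⟩
  · have hji : j < i := lt_of_le_of_ne (not_lt.1 fun h => hji (by simpa using h))
      (mem_erase.1 hj).1
    rw [hC hji, zero_mul]

section Ordered

variable {α : Type*} [Field α] [LinearOrder α] [IsStrictOrderedRing α]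

theorem div_le_of_le_mul_of_nonneg {a c u w : α} (hc : 0 < c) (hcu : c ≤ u) (ha : 0 ≤ a / u)
    (h : a ≤ c * w) : a / u ≤ w := by
  refine le_of_mul_le_mul_left ?_ hc
  calc c * (a / u) ≤ u * (a / u) := mul_le_mul_of_nonneg_right hcu ha
    _ = a := mul_div_cancel₀ a (hc.trans_le hcu).ne'
    _ ≤ c * w := h

theorem le_div_of_mul_le_of_le {a c l w : α} (hl : 0 < l) (hlc : l ≤ c) (hw : 0 ≤ w)
    (h : c * w ≤ a) : w ≤ a / l :=
  (le_div_iff₀' hl).2 ((mul_le_mul_of_nonneg_right hlc hw).trans h)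

end Ordered

/-- Phase-two (back-substitution) interval correctness for an upper-triangular system:
if `C` is upper triangular with `0 ≤ c̲ ≤ C ≤ c̄` elementwise, positive diagonal lower
bounds, `q̲ ≤ q ≤ q̄`, `C.mulVec w = q`, and the recursively defined lower bounds
`w̲_i = (q̲_i − Σ_{j>i} c̄_{ij} w̄_j)/c̄_{ii}` are nonnegative, then
`w̲_i ≤ w_i ≤ w̄_i` for all `i`, where `w̄_i = (q̄_i − Σ_{j>i} c̲_{ij} w̲_j)/c̲_{ii}`. -/
theorem interval_back_substitution_correct
    {K : ℕ} (C cl cu : Matrix (Fin K) (Fin K) ℝ)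
    (htri : ∀ i j : Fin K, j < i → C i j = 0)
    (hclnn : ∀ i j : Fin K, 0 ≤ cl i j)
    (hcl : ∀ i j : Fin K, cl i j ≤ C i j) (hcu : ∀ i j : Fin K, C i j ≤ cu i j)
    (hdiag : ∀ i : Fin K, 0 < cl i i)
    (q ql qu : Fin K → ℝ)
    (hql : ∀ i, ql i ≤ q i) (hqu : ∀ i, q i ≤ qu i)
    (w : Fin K → ℝ) (hsol : C.mulVec w = q)
    (wl wu : Fin K → ℝ)
    (hwl : ∀ i : Fin K,
      wl i = (ql i - ∑ j ∈ Finset.univ.filter (fun j => i < j), cu i j * wu j) / cu i i)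
    (hwu : ∀ i : Fin K,
      wu i = (qu i - ∑ j ∈ Finset.univ.filter (fun j => i < j), cl i j * wl j) / cl i i)
    (hwlnn : ∀ i, 0 ≤ wl i) :
    ∀ i, wl i ≤ w i ∧ w i ≤ wu i := by
  have hCnn (i j : Fin K) : 0 ≤ C i j := (hclnn i j).trans (hcl i j)
  intro i
  induction i using WellFoundedGT.induction with
  | _ i ih =>
  have hwnn (j : Fin K) (hj : i < j) : 0 ≤ w j := (hwlnn j).trans (ih j hj).1
  have hrow : q i = C i i * w i + ∑ j ∈ univ.filter (fun j => i < j), C i j * w j := by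
    rw [← hsol]
    exact Matrix.BlockTriangular.mulVec_apply (C := C) (fun _ _ h => htri _ _ h) w i
  have hsum_le : ∑ j ∈ univ.filter (fun j => i < j), C i j * w j
      ≤ ∑ j ∈ univ.filter (fun j => i < j), cu i j * wu j :=
    sum_le_sum fun j hj => have hj := (mem_filter.1 hj).2
      mul_le_mul (hcu i j) (ih j hj).2 (hwnn j hj) ((hCnn i j).trans (hcu i j))
  have le_hsum : ∑ j ∈ univ.filter (fun j => i < j), cl i j * wl j
      ≤ ∑ j ∈ univ.filter (fun j => i < j), C i j * w j :=
    sum_le_sum fun j hj => mul_le_mul (hcl i j) (ih j (mem_filter.1 hj).2).1 (hwlnn j) (hCnn i j)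
  have hCii : 0 < C i i := (hdiag i).trans_le (hcl i i)
  have hlower : wl i ≤ w i := by
    have hwlnn_i := hwlnn i
    rw [hwl i] at hwlnn_i ⊢
    exact div_le_of_le_mul_of_nonneg hCii (hcu i i) hwlnn_i (by linarith [hql i])
  refine ⟨hlower, ?_⟩
  rw [hwu i]
  exact le_div_of_mul_le_of_le (hdiag i) (hcl i i) ((hwlnn i).trans hlower)
    (by linarith [hqu i])
end
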